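/- Let R be a commutative unital reduced ring and let M be a projective R-module. Then M is a reduced R-module. -/

import Mathlib

/-! A projective module embeds into the free module `M →₀ R`, which is reduced coordinatewise
because `R` is. -/

/-- `M` is `a`-reduced if `a ^ 2 • m = 0` implies `a • m = 0` for all `m : M`. -/
def IsAReduced (R : Type*) [CommRing R] (M : Type*) [AddCommGroup M] [Module R M] (a : R) :
    Prop :=
  ∀ m : M, a ^ 2 • m = 0 → a • m = 0

section IsAReduced

variable {R : Type*} [CommRing R] {M N : Type*} [AddCommGroup M] [Module R M]
  [AddCommGroup N] [Module R N]

theorem IsAReduced.of_injective {a : R} (f : M →ₗ[R] N) (hf : Function.Injective f)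
    (hN : IsAReduced R N a) : IsAReduced R M a := fun m hm =>
  hf <| by rw [map_smul, hN (f m) (by rw [← map_smul, hm, map_zero]), map_zero]

theorem isAReduced_self [IsReduced R] (a : R) : IsAReduced R R a := fun x hx =>
  IsReduced.eq_zero _ ⟨2, by
    rw [smul_eq_mul] at hx ⊢
    rw [mul_pow, sq x, ← mul_assoc, hx, zero_mul]⟩

theorem IsAReduced.finsupp {a : R} (ι : Type*) (hM : IsAReduced R M a) :
    IsAReduced R (ι →₀ M) a := fun m hm =>
  Finsupp.ext fun i => hM (m i) (by simpa using DFunLike.congr_fun hm i)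

end IsAReduced

/-- Every projective module over a commutative unital reduced ring is reduced. -/
theorem projective_module_over_reduced_ring_is_reduced
    (R : Type*) [CommRing R] [IsReduced R]
    (M : Type*) [AddCommGroup M] [Module R M] [Module.Projective R M] :
    ∀ a : R, IsAReduced R M a := by
  intro a
  obtain ⟨s, hs⟩ := Module.projective_def.mp ‹Module.Projective R M›
  exact ((isAReduced_self a).finsupp M).of_injective s hs.injective
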